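/- Second moment of the averaged m-direction (I-RDSA) gradient estimate: let f : ℝ^d → ℝ be differentiable with L-Lipschitz gradient, let c > 0 and m ≥ 1, and let μ be a Borel probability measure on ℝ^d such that ∫ ⟨z, u⟩·z dμ(z) = u for every u ∈ ℝ^d, ∫ ‖⟨g, z⟩·z‖² dμ(z) ≤ s·‖g‖² for every g ∈ ℝ^d (for some s > 0), and M := ∫ ‖z‖⁶ dμ(z) < ∞. Then for every x ∈ ℝ^d, ∫ ‖ (1/m)·Σ_{i=1}^m ((f(x + c·z_i) − f(x))/c)·z_i ‖² dμ^{⊗m}(z_1, …, z_m) ≤ 2(1 + s/m)·‖∇f(x)‖² + ((1 + m)/(2m))·c²L²·M. -/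

import Mathlib

/-!
Split the difference quotient as `((f (x + c • z) - f x) / c) • z = ⟪z, ∇f x⟫ • z + R z`.
The descent lemma for an `L`-Lipschitz gradient gives `‖R z‖ ≤ |c| L ‖z‖³ / 2`, so after
`‖a + b‖² ≤ 2‖a‖² + 2‖b‖²` and Cauchy–Schwarz the remainders cost at most `c²L²M/2`.
For the linear part `A z = ⟪z, ∇f x⟫ • z`, independence of the samples turns each of the
`m(m - 1)` off-diagonal terms `E⟪A zᵢ, A zⱼ⟫` into `‖E A‖² = ‖∇f x‖²` (isotropy of `μ`), and
each of the `m` diagonal terms is at most `s ‖∇f x‖²`.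
-/

open MeasureTheory ProbabilityTheory Finset
open scoped RealInnerProductSpace

theorem norm_sum_add_sq_le {ι E : Type*} [SeminormedAddCommGroup E] (s : Finset ι)
    (a b : ι → E) :
    ‖∑ i ∈ s, (a i + b i)‖ ^ 2 ≤ 2 * ‖∑ i ∈ s, a i‖ ^ 2 + 2 * #s * ∑ i ∈ s, ‖b i‖ ^ 2 := by
  have hb : ‖∑ i ∈ s, b i‖ ^ 2 ≤ #s * ∑ i ∈ s, ‖b i‖ ^ 2 :=
    (pow_le_pow_left₀ (norm_nonneg _) (norm_sum_le _ _) 2).trans (sq_sum_le_card_mul_sum_sq ..)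
  have hab := norm_add_le (∑ i ∈ s, a i) (∑ i ∈ s, b i)
  rw [sum_add_distrib]
  nlinarith [sq_nonneg (‖∑ i ∈ s, a i‖ - ‖∑ i ∈ s, b i‖),
    norm_nonneg (∑ i ∈ s, a i + ∑ i ∈ s, b i)]

theorem norm_sum_sq_eq_sum_sum_inner {ι E : Type*} [NormedAddCommGroup E]
    [InnerProductSpace ℝ E] (s : Finset ι) (v : ι → E) :
    ‖∑ i ∈ s, v i‖ ^ 2 = ∑ i ∈ s, ∑ j ∈ s, ⟪v i, v j⟫ := by
  rw [← real_inner_self_eq_norm_sq, sum_inner]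
  simp_rw [inner_sum]

section Descent

variable {E : Type*} [NormedAddCommGroup E] [InnerProductSpace ℝ E] [CompleteSpace E]
  {f : E → ℝ} {L : ℝ}

theorem abs_sub_sub_inner_gradient_le (hf : Differentiable ℝ f)
    (hLip : ∀ u w, ‖gradient f u - gradient f w‖ ≤ L * ‖u - w‖) (x v : E) :
    |f (x + v) - f x - ⟪gradient f x, v⟫| ≤ L / 2 * ‖v‖ ^ 2 := by
  set φ : ℝ → ℝ := fun t => f (x + t • v) - f x - t * ⟪gradient f x, v⟫
  have hφ : ∀ t, HasDerivAt φ ⟪gradient f (x + t • v) - gradient f x, v⟫ t := by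
    intro t
    have hline : HasDerivAt (fun t : ℝ => x + t • v) v t := by
      simpa using ((hasDerivAt_id t).smul_const v).const_add x
    refine (((hf _).hasGradientAt.hasFDerivAt.comp_hasDerivAt t hline).sub_const (f x)
      |>.sub ((hasDerivAt_id t).mul_const ⟪gradient f x, v⟫)).congr_deriv ?_
    simp [inner_sub_left]
  have hB : ∀ t, HasDerivAt (fun t => L / 2 * ‖v‖ ^ 2 * t ^ 2) (L * ‖v‖ ^ 2 * t) t := by
    intro t
    exact ((hasDerivAt_pow 2 t).const_mul (L / 2 * ‖v‖ ^ 2)).congr_deriv (by ring)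
  have hbound : ∀ t ∈ Set.Ico (0 : ℝ) 1,
      ‖⟪gradient f (x + t • v) - gradient f x, v⟫‖ ≤ L * ‖v‖ ^ 2 * t := by
    rintro t ⟨ht, -⟩
    calc ‖⟪gradient f (x + t • v) - gradient f x, v⟫‖
        ≤ ‖gradient f (x + t • v) - gradient f x‖ * ‖v‖ := norm_inner_le_norm _ _
      _ ≤ L * ‖x + t • v - x‖ * ‖v‖ := by gcongr; exact hLip _ _
      _ = L * ‖v‖ ^ 2 * t := by
        rw [add_sub_cancel_left, norm_smul, Real.norm_of_nonneg ht]; ring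
  have := image_norm_le_of_norm_deriv_right_le_deriv_boundary (f := φ) (a := 0) (b := 1)
    (fun t _ => (hφ t).continuousAt.continuousWithinAt) (fun t _ => (hφ t).hasDerivWithinAt)
    (by simp [φ]) hB hbound (Set.right_mem_Icc.2 zero_le_one)
  simpa [φ] using this

theorem norm_slope_smul_sub_inner_smul_le (hf : Differentiable ℝ f)
    (hLip : ∀ u w, ‖gradient f u - gradient f w‖ ≤ L * ‖u - w‖) {c : ℝ} (hc : c ≠ 0) (x z : E) :
    ‖((f (x + c • z) - f x) / c) • z - ⟪z, gradient f x⟫ • z‖ ≤ |c| * L / 2 * ‖z‖ ^ 3 := by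
  have hslope : (f (x + c • z) - f x) / c - ⟪z, gradient f x⟫
      = (f (x + c • z) - f x - ⟪gradient f x, c • z⟫) / c := by
    rw [real_inner_smul_right, real_inner_comm]; field_simp
  rw [← sub_smul, norm_smul, Real.norm_eq_abs, hslope, abs_div]
  calc |f (x + c • z) - f x - ⟪gradient f x, c • z⟫| / |c| * ‖z‖
      ≤ L / 2 * ‖c • z‖ ^ 2 / |c| * ‖z‖ := by
        gcongr; exact abs_sub_sub_inner_gradient_le hf hLip x (c • z)
    _ = |c| * L / 2 * ‖z‖ ^ 3 := by
        rw [norm_smul, Real.norm_eq_abs]; field_simp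

theorem norm_sum_slope_smul_sq_le (hf : Differentiable ℝ f)
    (hLip : ∀ u w, ‖gradient f u - gradient f w‖ ≤ L * ‖u - w‖) {c : ℝ} (hc : c ≠ 0) (x : E)
    {ι : Type*} (s : Finset ι) (z : ι → E) :
    ‖∑ i ∈ s, ((f (x + c • z i) - f x) / c) • z i‖ ^ 2 ≤
      2 * ‖∑ i ∈ s, ⟪z i, gradient f x⟫ • z i‖ ^ 2 + #s * (c * L) ^ 2 / 2 * ∑ i ∈ s, ‖z i‖ ^ 6 := by
  have hR : ∀ i ∈ s, ‖((f (x + c • z i) - f x) / c) • z i - ⟪z i, gradient f x⟫ • z i‖ ^ 2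
      ≤ (c * L) ^ 2 / 4 * ‖z i‖ ^ 6 := fun i _ =>
    calc _ ≤ (|c| * L / 2 * ‖z i‖ ^ 3) ^ 2 := pow_le_pow_left₀ (norm_nonneg _)
          (norm_slope_smul_sub_inner_smul_le hf hLip hc x (z i)) 2
      _ = (c * L) ^ 2 / 4 * ‖z i‖ ^ 6 := by rw [mul_pow c, ← sq_abs c]; ring
  have h := norm_sum_add_sq_le s (fun i => ⟪z i, gradient f x⟫ • z i)
    (fun i => ((f (x + c • z i) - f x) / c) • z i - ⟪z i, gradient f x⟫ • z i)
  simp only [add_sub_cancel] at h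
  refine h.trans ?_
  have hR_sum := sum_le_sum hR
  rw [← mul_sum] at hR_sum
  nlinarith [(#s).cast_nonneg (α := ℝ)]

end Descent

section SampleSum

variable {Ω ι : Type*} [MeasurableSpace Ω] {μ : Measure Ω} [IsProbabilityMeasure μ] [Fintype ι]

theorem integral_sum_comp_eval {F : Type*} [NormedAddCommGroup F] [NormedSpace ℝ F]
    {X : Ω → F} (hX : Integrable X μ) :
    ∫ ω : ι → Ω, ∑ i, X (ω i) ∂(Measure.pi fun _ => μ) = Fintype.card ι • ∫ ω, X ω ∂μ := by
  rw [integral_finsetSum _ fun i _ => integrable_comp_eval (μ := fun _ => μ) hX]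
  simp [integral_comp_eval (μ := fun _ => μ) hX.aestronglyMeasurable]

variable {E : Type*} [NormedAddCommGroup E] [InnerProductSpace ℝ E] {X Y : Ω → E}

theorem integrable_inner_comp_eval (hX : MemLp X 2 μ) (hY : MemLp Y 2 μ) (i j : ι) :
    Integrable (fun ω : ι → Ω => ⟪X (ω i), Y (ω j)⟫) (Measure.pi fun _ => μ) := by
  have hXi := hX.comp_measurePreserving (measurePreserving_eval (fun _ => μ) i)
  have hYj := hY.comp_measurePreserving (measurePreserving_eval (fun _ => μ) j)
  refine (hXi.norm.integrable_mul hYj.norm).mono'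
    (hXi.aestronglyMeasurable.inner hYj.aestronglyMeasurable) (.of_forall fun ω => ?_)
  exact norm_inner_le_norm _ _

theorem integral_inner_comp_eval_of_ne [CompleteSpace E] (hX : Integrable X μ)
    (hY : Integrable Y μ) {i j : ι} (hij : i ≠ j) :
    ∫ ω : ι → Ω, ⟪X (ω i), Y (ω j)⟫ ∂(Measure.pi fun _ => μ) = ⟪∫ ω, X ω ∂μ, ∫ ω, Y ω ∂μ⟫ := by
  have hind := (iIndepFun_pi (μ := fun _ => μ) (X := fun _ => id)
    fun _ => aemeasurable_id).indepFun hij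
  have h := hind.integral_bilin_comp_comp (measurable_pi_apply i).aemeasurable
    (measurable_pi_apply j).aemeasurable (f := X) (g := Y)
    (by convert hX; exact (measurePreserving_eval _ i).map_eq)
    (by convert hY; exact (measurePreserving_eval _ j).map_eq) (innerSL ℝ)
  rwa [← integral_comp_eval (μ := fun _ => μ) (i := i) hX.aestronglyMeasurable,
    ← integral_comp_eval (μ := fun _ => μ) (i := j) hY.aestronglyMeasurable]

theorem integrable_norm_sum_comp_eval_sq (hX : MemLp X 2 μ) :
    Integrable (fun ω : ι → Ω => ‖∑ i, X (ω i)‖ ^ 2) (Measure.pi fun _ => μ) := by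
  simp_rw [norm_sum_sq_eq_sum_sum_inner]
  exact integrable_finsetSum _ fun i _ => integrable_finsetSum _ fun j _ =>
    integrable_inner_comp_eval hX hX i j

theorem integral_norm_sum_comp_eval_sq [CompleteSpace E] (hX : MemLp X 2 μ) :
    ∫ ω : ι → Ω, ‖∑ i, X (ω i)‖ ^ 2 ∂(Measure.pi fun _ => μ) =
      Fintype.card ι * ∫ ω, ‖X ω‖ ^ 2 ∂μ
        + Fintype.card ι * (Fintype.card ι - 1) * ‖∫ ω, X ω ∂μ‖ ^ 2 := by
  classical
  have hX1 : Integrable X μ := hX.integrable one_le_two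
  have hrow : ∀ i : ι, ∑ j, ∫ ω : ι → Ω, ⟪X (ω i), X (ω j)⟫ ∂(Measure.pi fun _ => μ) =
      ∫ ω, ‖X ω‖ ^ 2 ∂μ + (Fintype.card ι - 1) * ‖∫ ω, X ω ∂μ‖ ^ 2 := by
    intro i
    have hdiag : ∫ ω : ι → Ω, ⟪X (ω i), X (ω i)⟫ ∂(Measure.pi fun _ => μ)
        = ∫ ω, ‖X ω‖ ^ 2 ∂μ := by
      simp_rw [real_inner_self_eq_norm_sq]
      exact integral_comp_eval (μ := fun _ => μ) (hX.aestronglyMeasurable.norm.pow 2)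
    have hoff : ∀ j ∈ univ.erase i,
        ∫ ω : ι → Ω, ⟪X (ω i), X (ω j)⟫ ∂(Measure.pi fun _ => μ) = ‖∫ ω, X ω ∂μ‖ ^ 2 := by
      intro j hj
      rw [integral_inner_comp_eval_of_ne hX1 hX1 (ne_of_mem_erase hj).symm,
        real_inner_self_eq_norm_sq]
    rw [← add_sum_erase _ _ (mem_univ i), hdiag, sum_congr rfl hoff, sum_const,
      card_erase_of_mem (mem_univ i), card_univ, nsmul_eq_mul,
      Nat.cast_pred (Fintype.card_pos_iff.2 ⟨i⟩)]
  simp_rw [norm_sum_sq_eq_sum_sum_inner]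
  rw [integral_finsetSum _ fun i _ => integrable_finsetSum _ fun j _ =>
    integrable_inner_comp_eval hX hX i j]
  simp_rw [integral_finsetSum _ fun j _ => integrable_inner_comp_eval hX hX _ j, hrow,
    sum_const, card_univ, nsmul_eq_mul]
  ring

end SampleSum

theorem memLp_two_inner_smul_self {Ω E : Type*} [MeasurableSpace Ω] {μ : Measure Ω}
    [NormedAddCommGroup E] [InnerProductSpace ℝ E] {X : Ω → E} (hX : AEStronglyMeasurable X μ)
    (h4 : Integrable (fun ω => ‖X ω‖ ^ 4) μ) (g : E) :
    MemLp (fun ω => ⟪X ω, g⟫ • X ω) 2 μ := by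
  have hmeas : AEStronglyMeasurable (fun ω => ⟪X ω, g⟫ • X ω) μ :=
    (hX.inner aestronglyMeasurable_const).smul hX
  rw [memLp_two_iff_integrable_sq_norm hmeas]
  refine (h4.const_mul (‖g‖ ^ 2)).mono' (hmeas.norm.pow 2) (.of_forall fun ω => ?_)
  have h : ‖⟪X ω, g⟫ • X ω‖ ≤ ‖g‖ * ‖X ω‖ ^ 2 := by
    rw [norm_smul, Real.norm_eq_abs]
    nlinarith [abs_real_inner_le_norm (X ω) g, norm_nonneg (X ω)]
  rw [Real.norm_of_nonneg (by positivity)]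
  nlinarith [pow_le_pow_left₀ (norm_nonneg _) h 2]

theorem integral_norm_sum_slope_smul_sq_le {E : Type*} [NormedAddCommGroup E]
    [InnerProductSpace ℝ E] [CompleteSpace E] [MeasurableSpace E] [BorelSpace E]
    [SecondCountableTopology E] {f : E → ℝ} {L : ℝ} (hf : Differentiable ℝ f)
    (hLip : ∀ u w, ‖gradient f u - gradient f w‖ ≤ L * ‖u - w‖) {c : ℝ} (hc : c ≠ 0) (x : E)
    {μ : Measure E} [IsProbabilityMeasure μ] (h6 : Integrable (fun z => ‖z‖ ^ 6) μ)
    (ι : Type*) [Fintype ι] :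
    ∫ zs : ι → E, ‖∑ i, ((f (x + c • zs i) - f x) / c) • zs i‖ ^ 2 ∂(Measure.pi fun _ => μ) ≤
      2 * (Fintype.card ι * ∫ z, ‖⟪z, gradient f x⟫ • z‖ ^ 2 ∂μ
          + Fintype.card ι * (Fintype.card ι - 1) * ‖∫ z, ⟪z, gradient f x⟫ • z ∂μ‖ ^ 2)
        + Fintype.card ι * (c * L) ^ 2 / 2 * (Fintype.card ι * ∫ z, ‖z‖ ^ 6 ∂μ) := by
  have hA : MemLp (fun z : E => ⟪z, gradient f x⟫ • z) 2 μ := memLp_two_inner_smul_self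
    aestronglyMeasurable_id (integrable_norm_pow_of_le aestronglyMeasurable_id (by norm_num) h6) _
  have hA_int := (integrable_norm_sum_comp_eval_sq (ι := ι) hA).const_mul 2
  have h6_int : Integrable (fun zs : ι → E => Fintype.card ι * (c * L) ^ 2 / 2 * ∑ i, ‖zs i‖ ^ 6)
      (Measure.pi fun _ => μ) :=
    (integrable_finsetSum univ fun i _ => integrable_comp_eval (μ := fun _ => μ) h6).const_mul _
  refine (integral_mono_of_nonneg (.of_forall fun zs => by positivity) (hA_int.add h6_int)
    (.of_forall fun zs => norm_sum_slope_smul_sq_le hf hLip hc x univ zs)).trans_eq ?_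
  rw [integral_add' hA_int h6_int, integral_const_mul, integral_const_mul,
    integral_norm_sum_comp_eval_sq hA, integral_sum_comp_eval (ι := ι) h6, nsmul_eq_mul]

theorem irdsa_second_moment_general
    (d : ℕ)
    (f : EuclideanSpace ℝ (Fin d) → ℝ)
    (hfdiff : Differentiable ℝ f)
    (L : ℝ)
    (hflip : ∀ u w, ‖gradient f u - gradient f w‖ ≤ L * ‖u - w‖)
    (c : ℝ) (hc : 0 < c)
    (m : ℕ) (hm : 1 ≤ m)
    (μ : Measure (EuclideanSpace ℝ (Fin d))) [IsProbabilityMeasure μ]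
    (hmean : ∀ u : EuclideanSpace ℝ (Fin d), (∫ z, ⟪z, u⟫ • z ∂μ) = u)
    (s : ℝ)
    (hsbound : ∀ g : EuclideanSpace ℝ (Fin d),
      (∫ z, ‖(⟪g, z⟫ : ℝ) • z‖ ^ 2 ∂μ) ≤ s * ‖g‖ ^ 2)
    (M : ℝ) (hM6 : Integrable (fun z : EuclideanSpace ℝ (Fin d) => ‖z‖ ^ 6) μ)
    (hM : M = ∫ z, ‖z‖ ^ 6 ∂μ)
    (x : EuclideanSpace ℝ (Fin d)) :
    (∫ zs : Fin m → EuclideanSpace ℝ (Fin d),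
        ‖(1 / (m : ℝ)) • ∑ i : Fin m, ((f (x + c • zs i) - f x) / c) • zs i‖ ^ 2
        ∂(Measure.pi fun _ : Fin m => μ)) ≤
      2 * (1 + s / m) * ‖gradient f x‖ ^ 2 +
        ((1 + (m : ℝ)) / (2 * m)) * c ^ 2 * L ^ 2 * M := by
  set g := gradient f x
  have hsum := integral_norm_sum_slope_smul_sq_le hfdiff hflip hc.ne' x hM6 (Fin m)
  rw [hmean, Fintype.card_fin, ← hM] at hsum
  have hA_sq : ∫ z, ‖⟪z, g⟫ • z‖ ^ 2 ∂μ ≤ s * ‖g‖ ^ 2 := by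
    simpa only [real_inner_comm] using hsbound g
  have hm0 : (0 : ℝ) < m := by exact_mod_cast hm
  have hM0 : 0 ≤ M := hM ▸ integral_nonneg fun z => by positivity
  calc (∫ zs : Fin m → EuclideanSpace ℝ (Fin d),
        ‖(1 / (m : ℝ)) • ∑ i : Fin m, ((f (x + c • zs i) - f x) / c) • zs i‖ ^ 2
        ∂(Measure.pi fun _ : Fin m => μ))
      = (1 / (m : ℝ)) ^ 2 * ∫ zs : Fin m → EuclideanSpace ℝ (Fin d),
        ‖∑ i, ((f (x + c • zs i) - f x) / c) • zs i‖ ^ 2 ∂(Measure.pi fun _ => μ) := by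
        simp_rw [norm_smul, mul_pow, Real.norm_of_nonneg (by positivity : (0 : ℝ) ≤ 1 / m)]
        exact integral_const_mul _ _
    _ ≤ (1 / (m : ℝ)) ^ 2 * (2 * (m * (s * ‖g‖ ^ 2) + m * (m - 1) * ‖g‖ ^ 2)
          + m * (c * L) ^ 2 / 2 * (m * M)) := by gcongr; exact hsum.trans (by gcongr)
    _ ≤ 2 * (1 + s / m) * ‖g‖ ^ 2 + ((1 + (m : ℝ)) / (2 * m)) * c ^ 2 * L ^ 2 * M := by
        have hgap : 2 * (1 + s / m) * ‖g‖ ^ 2 + ((1 + (m : ℝ)) / (2 * m)) * c ^ 2 * L ^ 2 * M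
            - (1 / (m : ℝ)) ^ 2 * (2 * (m * (s * ‖g‖ ^ 2) + m * (m - 1) * ‖g‖ ^ 2)
              + m * (c * L) ^ 2 / 2 * (m * M))
            = (2 * ‖g‖ ^ 2 + c ^ 2 * L ^ 2 * M / 2) / m := by
          field_simp
          ring
        rw [← sub_nonneg, hgap]
        positivity

theorem irdsa_second_moment
    (d : ℕ) (hd : 1 ≤ d)
    (f : EuclideanSpace ℝ (Fin d) → ℝ)
    (hfdiff : Differentiable ℝ f)
    (L : ℝ) (hL : 0 < L)
    (hflip : ∀ u w, ‖gradient f u - gradient f w‖ ≤ L * ‖u - w‖)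
    (c : ℝ) (hc : 0 < c)
    (m : ℕ) (hm : 1 ≤ m)
    (μ : Measure (EuclideanSpace ℝ (Fin d))) [IsProbabilityMeasure μ]
    (hmean : ∀ u : EuclideanSpace ℝ (Fin d), (∫ z, ⟪z, u⟫ • z ∂μ) = u)
    (s : ℝ) (hs : 0 < s)
    (hsbound : ∀ g : EuclideanSpace ℝ (Fin d),
      (∫ z, ‖(⟪g, z⟫ : ℝ) • z‖ ^ 2 ∂μ) ≤ s * ‖g‖ ^ 2)
    (M : ℝ) (hM6 : Integrable (fun z : EuclideanSpace ℝ (Fin d) => ‖z‖ ^ 6) μ)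
    (hM : M = ∫ z, ‖z‖ ^ 6 ∂μ)
    (x : EuclideanSpace ℝ (Fin d)) :
    (∫ zs : Fin m → EuclideanSpace ℝ (Fin d),
        ‖(1 / (m : ℝ)) • ∑ i : Fin m, ((f (x + c • zs i) - f x) / c) • zs i‖ ^ 2
        ∂(Measure.pi fun _ : Fin m => μ)) ≤
      2 * (1 + s / m) * ‖gradient f x‖ ^ 2 +
        ((1 + (m : ℝ)) / (2 * m)) * c ^ 2 * L ^ 2 * M :=
  irdsa_second_moment_general d f hfdiff L hflip c hc m hm μ hmean s hsbound M hM6 hM x
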